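/- arXiv:2104.10504 — 4 statements merged into one kernel-verified Lean document; each statement's English description precedes it below -/
import Mathlib

section
/- Fix an index i ∈ {1, ..., n} and a commutative ring Λ. Let σ, τ be functions from the set of affine hyperplanes of k^n to Λ satisfying the commutation relations. Assume σ(V) = 0 for every vertical hyperplane V, and let H_0 be a dominating hyperplane with σ(H_0) a unit of Λ. Let (H_0, H_1) be a parallel pair, let H_2 be a dominating hyperplane with H_2 ∉ {H_0, H_1} and H_0 ∩ H_2 ≠ ∅, and let H_1', H_2' be vertical hyperplanes such that (H_0, H_2, H_1') and (H_1, H_2, H_2') are dependent triples, τ(H_1') = 0, and τ(H_2') = 1. Then σ(H_1) = σ(H_2). -/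
open scoped BigOperators

/-- The affine function on `k^n` with coefficient vector `v = (a₀, a₁, …, aₙ)`,
namely `x ↦ a₀ + a₁ x₁ + ⋯ + aₙ xₙ`. -/
def affFun {k : Type*} [Field k] {n : ℕ} (v : Fin (n + 1) → k) (x : Fin n → k) : k :=
  v 0 + ∑ i : Fin n, v i.succ * x i

/-- `v` is a coefficient vector of the affine hyperplane `H ⊆ k^n`:
the linear part of `v` is nonzero and `H` is the zero set of the corresponding
affine function. -/
def IsCoeffVec {k : Type*} [Field k] {n : ℕ} (H : Set (Fin n → k)) (v : Fin (n + 1) → k) :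
    Prop :=
  (∃ i : Fin n, v i.succ ≠ 0) ∧ H = {x | affFun v x = 0}

/-- `H` is an affine hyperplane in `k^n`. -/
def IsAffHyperplane {k : Type*} [Field k] {n : ℕ} (H : Set (Fin n → k)) : Prop :=
  ∃ v, IsCoeffVec H v

/-- `(H₁, H₂)` is a parallel pair: distinct disjoint affine hyperplanes. -/
def ParallelPair {k : Type*} [Field k] {n : ℕ} (H₁ H₂ : Set (Fin n → k)) : Prop :=
  IsAffHyperplane H₁ ∧ IsAffHyperplane H₂ ∧ H₁ ≠ H₂ ∧ H₁ ∩ H₂ = ∅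

/-- `(H₁, H₂, H₃)` is a dependent triple: pairwise distinct affine hyperplanes whose
intersection is a nonempty affine subspace of `k^n` of dimension `n - 2`. -/
def DependentTriple {k : Type*} [Field k] {n : ℕ} (H₁ H₂ H₃ : Set (Fin n → k)) : Prop :=
  IsAffHyperplane H₁ ∧ IsAffHyperplane H₂ ∧ IsAffHyperplane H₃ ∧
  H₁ ≠ H₂ ∧ H₁ ≠ H₃ ∧ H₂ ≠ H₃ ∧
  ∃ A : AffineSubspace k (Fin n → k), (A : Set (Fin n → k)) = H₁ ∩ H₂ ∩ H₃ ∧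
    (H₁ ∩ H₂ ∩ H₃ : Set (Fin n → k)).Nonempty ∧
    Module.finrank k A.direction = n - 2

/-- `σ, τ` satisfy the commutation relations coming from the vanishing of the
commutator in the two-step nilpotent fundamental group. -/
def CommRel {k : Type*} [Field k] {n : ℕ} {Λ : Type*} [CommRing Λ]
    (σ τ : Set (Fin n → k) → Λ) : Prop :=
  (∀ A B, ParallelPair A B → σ A * τ B = σ B * τ A) ∧
  (∀ A B C, DependentTriple A B C →
    (σ A - σ C) * (τ B - τ C) = (σ B - σ C) * (τ A - τ C))

/-- `H` is vertical with respect to the `i`-th coordinate. -/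
def VerticalH {k : Type*} [Field k] {n : ℕ} (i : Fin n) (H : Set (Fin n → k)) : Prop :=
  ∃ v, IsCoeffVec H v ∧ v i.succ = 0

/-- `H` is dominating with respect to the `i`-th coordinate. -/
def DominatingH {k : Type*} [Field k] {n : ℕ} (i : Fin n) (H : Set (Fin n → k)) : Prop :=
  ∃ v, IsCoeffVec H v ∧ v i.succ ≠ 0

/-- `σ` is `H₁`-compatible: it vanishes on hyperplanes parallel to `H₁` and takes
equal values on the last two members of any dependent triple starting with `H₁`. -/
def HCompatible {k : Type*} [Field k] {n : ℕ} {Λ : Type*} [CommRing Λ]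
    (H₁ : Set (Fin n → k)) (σ : Set (Fin n → k) → Λ) : Prop :=
  (∀ A, ParallelPair H₁ A → σ A = 0) ∧
  (∀ A B, DependentTriple H₁ A B → σ A = σ B)

/-- the key computation of the local theory (Lemma on
`σ(H₁) = σ(H₂)` in the configuration of Figure 1). -/
theorem stmt_7 {k : Type*} [Field k] {Λ : Type*} [CommRing Λ] {n : ℕ} (hn : 2 ≤ n)
    (i : Fin n) (σ τ : Set (Fin n → k) → Λ) (hrel : CommRel σ τ)
    (hvert : ∀ V, VerticalH i V → σ V = 0)
    (H₀ : Set (Fin n → k)) (hd0 : DominatingH i H₀) (hunit : IsUnit (σ H₀))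
    (H₁ : Set (Fin n → k)) (hpar : ParallelPair H₀ H₁)
    (H₂ : Set (Fin n → k)) (hd2 : DominatingH i H₂)
    (h20 : H₂ ≠ H₀) (h21 : H₂ ≠ H₁) (hmeet : (H₀ ∩ H₂).Nonempty)
    (H₁' H₂' : Set (Fin n → k)) (hv1 : VerticalH i H₁') (hv2 : VerticalH i H₂')
    (hdep1 : DependentTriple H₀ H₂ H₁') (hdep2 : DependentTriple H₁ H₂ H₂')
    (hτ1 : τ H₁' = 0) (hτ2 : τ H₂' = 1) :
    σ H₁ = σ H₂ := by
  obtain ⟨hP, hD⟩ := hrel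
  have e1 := hD _ _ _ hdep1
  have e2 := hD _ _ _ hdep2
  have e3 := hP _ _ hpar
  rw [hvert _ hv1, hτ1] at e1
  rw [hvert _ hv2, hτ2] at e2
  have key : σ H₀ * σ H₁ = σ H₀ * σ H₂ := by
    linear_combination σ H₁ * e1 - σ H₀ * e2 - σ H₂ * e3
  exact hunit.mul_left_cancel key
end

section
/- Assume k is an infinite field and n ≥ 2, and fix an index i ∈ {1, ..., n}. Let Λ be a commutative ring, let σ be a function from the set of affine hyperplanes of k^n to Λ, and let H_0 be a dominating hyperplane. Assume: (a) σ(V) = 0 for every vertical hyperplane V; (b) there exists a hyperplane H_1 such that (H_0, H_1) is a parallel pair and σ(H_1) = 0; and (c) σ(A) = σ(B) whenever (H_0, A) is a parallel pair and B is a dominating hyperplane with B ∉ {H_0, A} and H_0 ∩ B ≠ ∅. Then σ(H) = 0 for every affine hyperplane H ≠ H_0. -/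
open scoped BigOperators

lemma sum_mul_single_aux {k : Type*} [Field k] {n : ℕ} (a : Fin (n + 1) → k)
    (i : Fin n) (c : k) :
    ∑ m : Fin n, a m.succ * (Pi.single i c : Fin n → k) m = a i.succ * c := by
  rw [Finset.sum_eq_single i]
  · simp
  · intro m _ hm; simp [Pi.single_apply, hm]
  · simp

lemma affFun_update_aux {k : Type*} [Field k] {n : ℕ} (a : Fin (n + 1) → k)
    (j : Fin n) (x : Fin n → k) :
    affFun (Function.update a j.succ (a j.succ + 1)) x = affFun a x + x j := by
  unfold affFun
  rw [Function.update_of_ne (Fin.succ_ne_zero j).symm]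
  have h : ∀ m : Fin n,
      (Function.update a j.succ (a j.succ + 1)) m.succ * x m
        = a m.succ * x m + (if m = j then x m else 0) := by
    intro m
    by_cases h : m = j
    · subst h; simp [add_mul]
    · simp [Function.update_of_ne ((Fin.succ_injective n).ne h), h]
  simp_rw [h]
  rw [Finset.sum_add_distrib, Finset.sum_ite_eq' Finset.univ j (fun m => x m)]
  simp [add_assoc]

/-- the concluding combinatorial step of the proof of the main local
theorem: under hypotheses (a), (b), (c), the function `σ` vanishes on every hyperplane
other than `H₀`. -/
theorem stmt_8 {k : Type*} [Field k] [Infinite k] {Λ : Type*} [CommRing Λ] {n : ℕ}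
    (hn : 2 ≤ n) (i : Fin n)
    (σ : Set (Fin n → k) → Λ)
    (H₀ : Set (Fin n → k)) (hd0 : DominatingH i H₀)
    (ha : ∀ V, VerticalH i V → σ V = 0)
    (hb : ∃ H₁, ParallelPair H₀ H₁ ∧ σ H₁ = 0)
    (hc : ∀ A B, ParallelPair H₀ A → DominatingH i B → B ≠ H₀ → B ≠ A →
      (H₀ ∩ B).Nonempty → σ A = σ B) :
    ∀ H, IsAffHyperplane H → H ≠ H₀ → σ H = 0 := by
  -- obtain a coefficient vector of H₀
  obtain ⟨a, ⟨hlin, hH0⟩, hai⟩ := hd0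
  have hH0hyp : IsAffHyperplane H₀ := ⟨a, hlin, hH0⟩
  -- choose an index j ≠ i
  have h1n : 1 < n := hn
  set j : Fin n := if h : i.val = 0 then ⟨1, h1n⟩ else ⟨0, by omega⟩ with hj
  have hji : j ≠ i := by
    rw [hj]; split_ifs with h <;>
      (intro hc; apply_fun Fin.val at hc; simp at hc; omega)
  -- the auxiliary hyperplane B
  set b : Fin (n + 1) → k := Function.update a j.succ (a j.succ + 1) with hbdef
  set B : Set (Fin n → k) := {x | affFun b x = 0} with hBdef
  have hbi : b i.succ = a i.succ := by
    rw [hbdef, Function.update_of_ne ((Fin.succ_injective n).ne (Ne.symm hji))]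
  have hBcoeff : IsCoeffVec B b := ⟨⟨i, by rw [hbi]; exact hai⟩, rfl⟩
  have hBdom : DominatingH i B := ⟨b, hBcoeff, by rw [hbi]; exact hai⟩
  -- a point in H₀ ∩ B
  have hint : (H₀ ∩ B).Nonempty := by
    refine ⟨(Pi.single i (-a 0 / a i.succ) : Fin n → k), ?_, ?_⟩
    · rw [hH0]
      show affFun a _ = 0
      unfold affFun
      rw [sum_mul_single_aux]
      field_simp
      ring
    · show affFun b _ = 0
      rw [affFun_update_aux]
      have hp : (Pi.single i (-a 0 / a i.succ) : Fin n → k) j = 0 :=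
        Pi.single_eq_of_ne hji _
      unfold affFun
      rw [sum_mul_single_aux, hp]
      field_simp
      ring
  -- B ≠ H₀ via the point q
  have hBne : B ≠ H₀ := by
    intro hEq
    set c : k := -(a 0 + a j.succ) / a i.succ with hcdef
    set q : Fin n → k := (Pi.single i c : Fin n → k) + (Pi.single j 1 : Fin n → k) with hqdef
    have hsum : ∑ m : Fin n, a m.succ * q m = a i.succ * c + a j.succ := by
      have : ∀ m : Fin n, a m.succ * q m
          = a m.succ * (Pi.single i c : Fin n → k) m
            + a m.succ * (Pi.single j (1 : k) : Fin n → k) m := by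
        intro m; rw [hqdef]; simp [mul_add]
      simp_rw [this]
      rw [Finset.sum_add_distrib, sum_mul_single_aux, sum_mul_single_aux, mul_one]
    have hq0 : q ∈ H₀ := by
      rw [hH0]
      show affFun a q = 0
      unfold affFun
      rw [hsum, hcdef]
      field_simp
      ring
    have hqB : q ∉ B := by
      show ¬ affFun b q = 0
      rw [affFun_update_aux]
      have haq : affFun a q = 0 := by rw [hH0] at hq0; exact hq0
      have hqj : q j = 1 := by
        rw [hqdef]; simp [Pi.single_eq_of_ne (Ne.symm hji), Pi.single_eq_of_ne hji]
      rw [haq, hqj, zero_add]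
      exact one_ne_zero
    rw [hEq] at hqB
    exact hqB hq0
  -- key step: σ vanishes on dominating hyperplanes meeting H₀ and distinct from it
  obtain ⟨H₁, hpp1, hs1⟩ := hb
  have key : ∀ C, DominatingH i C → C ≠ H₀ → (H₀ ∩ C).Nonempty → σ C = 0 := by
    intro C hdC hCne hCint
    by_cases hC1 : C = H₁
    · rw [hC1]; exact hs1
    · rw [← hc H₁ C hpp1 hdC hCne hC1 hCint]; exact hs1
  have hsB : σ B = 0 := key B hBdom hBne hint
  -- main argument
  intro H hH hHne
  obtain ⟨v, hvlin, hHv⟩ := hH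
  by_cases hvi : v i.succ = 0
  · exact ha H ⟨v, ⟨hvlin, hHv⟩, hvi⟩
  · have hHdom : DominatingH i H := ⟨v, ⟨hvlin, hHv⟩, hvi⟩
    by_cases hmeet : (H₀ ∩ H).Nonempty
    · exact key H hHdom hHne hmeet
    · have hdisj : H₀ ∩ H = ∅ := Set.not_nonempty_iff_eq_empty.mp hmeet
      have hpp : ParallelPair H₀ H :=
        ⟨hH0hyp, ⟨v, hvlin, hHv⟩, Ne.symm hHne, hdisj⟩
      have hBneH : B ≠ H := by
        intro hEq
        rw [hEq] at hint
        exact hmeet hint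
      rw [hc H B hpp hBdom hBne hBneH hint]
      exact hsB
end

section
/- Let 1 ≤ m < n. Let H be an affine hyperplane in k^n with coefficient vector (a_0, a_1, ..., a_n) satisfying a_j = 0 for all j > m + 1, a_{m+1} ≠ 0, and (a_1, ..., a_m) ≠ 0. Let H_w = {x ∈ k^n : x_{m+1} = 0} and H_{1−w} = {x ∈ k^n : x_{m+1} = 1}. Then there exist affine hyperplanes H_1 and H_2, each having a coefficient vector with a_j = 0 for all j > m, such that (H, H_w, H_1) and (H, H_{1−w}, H_2) are dependent triples. -/
open scoped BigOperators

section Aux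
variable {k : Type*} [Field k] {n : ℕ}

/-- The linear part of the affine function with coefficient vector `a`. -/
def linPart (a : Fin (n + 1) → k) : (Fin n → k) →ₗ[k] k where
  toFun x := ∑ i, a i.succ * x i
  map_add' x y := by simp [mul_add, Finset.sum_add_distrib]
  map_smul' c x := by simp [Finset.mul_sum, mul_left_comm]

lemma affFun_eq (a : Fin (n + 1) → k) (x : Fin n → k) :
    affFun a x = a 0 + linPart a x := rfl

lemma linPart_single (a : Fin (n + 1) → k) (i : Fin n) (c : k) :
    linPart a (Pi.single i c) = a i.succ * c := by
  simp only [linPart, LinearMap.coe_mk, AddHom.coe_mk]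
  rw [Finset.sum_eq_single i]
  · simp
  · intro b _ hb; simp [Pi.single_apply, hb]
  · simp

lemma affFun_pt (v : Fin (n + 1) → k) (i₁ i₂ : Fin n) (c t : k) :
    affFun v (c • (Pi.single i₁ 1 : Fin n → k) + t • (Pi.single i₂ 1 : Fin n → k))
      = v 0 + c * v i₁.succ + t * v i₂.succ := by
  rw [affFun_eq, map_add, map_smul, map_smul, linPart_single, linPart_single]
  simp only [smul_eq_mul]; ring
end Aux

section Key
variable {k : Type*} [Field k] {n : ℕ}

lemma key_subspace {m : ℕ} (hmn : m < n) (a : Fin (n + 1) → k)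
    (j : Fin (n + 1)) (hj1 : 1 ≤ (j : ℕ)) (hjm : (j : ℕ) ≤ m) (haj : a j ≠ 0)
    (r : k) :
    ∃ A : AffineSubspace k (Fin n → k),
      (A : Set (Fin n → k)) = {x | affFun a x = 0} ∩ {x | x ⟨m, hmn⟩ = r} ∧
      ({x | affFun a x = 0} ∩ {x | x ⟨m, hmn⟩ = r} : Set (Fin n → k)).Nonempty ∧
      Module.finrank k A.direction = n - 2 := by
  set em : Fin n := ⟨m, hmn⟩ with hem
  set ej : Fin n := ⟨(j : ℕ) - 1, by omega⟩ with hej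
  have hejsucc : ej.succ = j := by
    apply Fin.ext; simp [hej, Fin.val_succ]; omega
  have hejem : ej ≠ em := by
    intro h; apply absurd (congrArg Fin.val h); simp [hej, hem]; omega
  set L : (Fin n → k) →ₗ[k] k × k := (linPart a).prod (LinearMap.proj em) with hL
  have hLapp : ∀ x, L x = (linPart a x, x em) := fun x => rfl
  have hsurj : Function.Surjective L := by
    rintro ⟨u, v⟩
    refine ⟨v • (Pi.single em 1 : Fin n → k)
      + ((u - a em.succ * v) / a j) • (Pi.single ej 1 : Fin n → k), ?_⟩
    rw [hLapp, Prod.mk.injEq]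
    constructor
    · rw [map_add, map_smul, map_smul, linPart_single, linPart_single, hejsucc]
      field_simp
      have := mul_inv_cancel₀ haj; linear_combination (u - a em.succ * v) * this
    · simp [Pi.single_apply, hejem]
  obtain ⟨p, hp⟩ := hsurj (-(a 0), r)
  have hpmem : ∀ x : Fin n → k,
      (affFun a x = 0 ∧ x em = r) ↔ L x = (-(a 0), r) := by
    intro x
    rw [hLapp, affFun_eq, Prod.mk.injEq]
    constructor
    · rintro ⟨h1, h2⟩; exact ⟨by linear_combination h1, h2⟩
    · rintro ⟨h1, h2⟩; exact ⟨by rw [h1]; ring, h2⟩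
  refine ⟨AffineSubspace.mk' p (LinearMap.ker L), ?_, ⟨p, ?_⟩, ?_⟩
  · ext x
    rw [SetLike.mem_coe, AffineSubspace.mem_mk', LinearMap.mem_ker]
    have : x -ᵥ p = x - p := rfl
    rw [this, map_sub, hp, sub_eq_zero]
    simp only [Set.mem_inter_iff, Set.mem_setOf_eq]
    exact (hpmem x).symm
  · simp only [Set.mem_inter_iff, Set.mem_setOf_eq]
    exact (hpmem p).mpr hp
  · rw [AffineSubspace.direction_mk']
    have h1 := LinearMap.finrank_range_add_finrank_ker L
    rw [LinearMap.range_eq_top.mpr hsurj, finrank_top, Module.finrank_pi] at h1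
    have h2 : Module.finrank k (k × k) = 2 := by
      simp [Module.finrank_prod]
    rw [h2, Fintype.card_fin] at h1
    omega
end Key


/-- a hyperplane `H` depending only on the first `m+1` coordinates, with
nonzero coefficient at `x_{m+1}` and nonzero linear part in the first `m` coordinates,
fits into dependent triples with `H_w = {x_{m+1} = 0}` resp. `H_{1-w} = {x_{m+1} = 1}`
and hyperplanes vertical over the first `m` coordinates. -/
theorem stmt_10 {k : Type*} [Field k] {n m : ℕ} (hm : 1 ≤ m) (hmn : m < n)
    (H : Set (Fin n → k)) (a : Fin (n + 1) → k) (ha : IsCoeffVec H a)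
    (h_high : ∀ j : Fin (n + 1), m + 1 < (j : ℕ) → a j = 0)
    (h_m1 : a ⟨m + 1, by omega⟩ ≠ 0)
    (h_low : ∃ j : Fin (n + 1), 1 ≤ (j : ℕ) ∧ (j : ℕ) ≤ m ∧ a j ≠ 0) :
    ∃ (H₁ H₂ : Set (Fin n → k)) (b₁ b₂ : Fin (n + 1) → k),
      IsCoeffVec H₁ b₁ ∧ IsCoeffVec H₂ b₂ ∧
      (∀ j : Fin (n + 1), m < (j : ℕ) → b₁ j = 0) ∧
      (∀ j : Fin (n + 1), m < (j : ℕ) → b₂ j = 0) ∧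
      DependentTriple H {x : Fin n → k | x ⟨m, hmn⟩ = 0} H₁ ∧
      DependentTriple H {x : Fin n → k | x ⟨m, hmn⟩ = 1} H₂ := by
  obtain ⟨j, hj1, hjm, haj⟩ := h_low
  set em : Fin n := ⟨m, hmn⟩ with hem
  have hemsucc : (em.succ : Fin (n + 1)) = ⟨m + 1, by omega⟩ := by
    apply Fin.ext; simp [hem, Fin.val_succ]
  have hm1' : a em.succ ≠ 0 := by rw [hemsucc]; exact h_m1
  set ej : Fin n := ⟨(j : ℕ) - 1, by omega⟩ with hej
  have hejsucc : ej.succ = j := by apply Fin.ext; simp [hej, Fin.val_succ]; omega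
  have hejem : ej ≠ em := by
    intro h; apply absurd (congrArg Fin.val h); simp [hej, hem]; omega
  have hHset : H = {x | affFun a x = 0} := ha.2
  -- the modified coefficient vectors
  set b : k → Fin (n + 1) → k := fun r i =>
    if i = 0 then a 0 + r * a em.succ else if (i : ℕ) = m + 1 then 0 else a i with hb
  have hb0 : ∀ r : k, b r 0 = a 0 + r * a em.succ := by intro r; simp [hb]
  have hbm : ∀ r : k, b r em.succ = 0 := by
    intro r
    have h1 : (em.succ : Fin (n + 1)) ≠ 0 := Fin.succ_ne_zero em
    have h2 : ((em.succ : Fin (n + 1)) : ℕ) = m + 1 := by simp [hem, Fin.val_succ]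
    simp [hb, h1, h2]
    exact fun h => absurd rfl h
  have hbj : ∀ r : k, b r j = a j := by
    intro r
    have h1 : j ≠ 0 := by intro h; subst h; simp at hj1
    have h2 : (j : ℕ) ≠ m + 1 := by omega
    simp [hb, h1, h2]
  have hbhigh : ∀ (r : k) (j' : Fin (n + 1)), m < (j' : ℕ) → b r j' = 0 := by
    intro r j' hj'
    have h0 : j' ≠ 0 := by intro h; subst h; rw [Fin.val_zero] at hj'; omega
    by_cases hc : (j' : ℕ) = m + 1
    · simp [hb, h0, hc]
    · have : m + 1 < (j' : ℕ) := by omega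
      simp [hb, h0, hc, h_high j' this]
  -- key identity
  have hid : ∀ (r : k) (x : Fin n → k),
      affFun a x = affFun (b r) x + a em.succ * (x em - r) := by
    intro r x
    have hsum : ∀ i : Fin n, a i.succ - b r i.succ = if i = em then a em.succ else 0 := by
      intro i
      by_cases h : i = em
      · subst h; rw [hbm]; simp
      · have h1 : (i.succ : Fin (n + 1)) ≠ 0 := Fin.succ_ne_zero i
        have h2 : (i : ℕ) ≠ m := fun hc => h (Fin.ext hc)
        simp [hb, h1, h2, Fin.val_succ, h]
    have hdiff : linPart a x - linPart (b r) x = a em.succ * x em := by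
      have h0 : linPart a x - linPart (b r) x
          = ∑ i, (if i = em then a em.succ else 0) * x i := by
        simp only [linPart, LinearMap.coe_mk, AddHom.coe_mk, ← Finset.sum_sub_distrib]
        exact Finset.sum_congr rfl fun i _ => by rw [← sub_mul, hsum i]
      rw [h0, Finset.sum_eq_single em]
      · simp
      · intro i _ hi; simp [hi]
      · simp
    rw [affFun_eq, affFun_eq, hb0]
    linear_combination hdiff
  -- witness points
  have hpt : ∀ r : k, ∃ p : Fin n → k, affFun a p = 1 ∧ p em = r := by
    intro r
    refine ⟨r • (Pi.single em 1 : Fin n → k)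
      + ((1 - a 0 - r * a em.succ) / a j) • (Pi.single ej 1 : Fin n → k), ?_, ?_⟩
    · rw [affFun_pt, hejsucc]; field_simp; ring
    · simp [Pi.single_apply, hejem.symm]
  have hq : ∀ r : k, ∃ q : Fin n → k,
      affFun (b r) q = 0 ∧ affFun a q = a em.succ ∧ q em = r + 1 := by
    intro r
    refine ⟨(r + 1) • (Pi.single em 1 : Fin n → k)
      + (-(a 0 + r * a em.succ) / a j) • (Pi.single ej 1 : Fin n → k), ?_, ?_, ?_⟩
    · rw [affFun_pt, hejsucc, hbj, hbm, hb0]; field_simp; ring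
    · rw [affFun_pt, hejsucc]; field_simp; ring
    · simp [Pi.single_apply, hejem.symm]
  -- distinctness
  have hne1 : ∀ r : k, H ≠ {x | x em = r} := by
    intro r h
    obtain ⟨p, hp1, hp2⟩ := hpt r
    have : p ∈ H := by rw [h]; exact hp2
    rw [hHset] at this
    simp only [Set.mem_setOf_eq] at this
    rw [hp1] at this
    exact one_ne_zero this
  have hne2 : ∀ r : k, H ≠ {x | affFun (b r) x = 0} := by
    intro r h
    obtain ⟨q, hq1, hq2, hq3⟩ := hq r
    have : q ∈ H := by rw [h]; exact hq1
    rw [hHset] at this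
    simp only [Set.mem_setOf_eq] at this
    exact hm1' (by rw [← hq2]; exact this)
  have hne3 : ∀ r : k, ({x | x em = r} : Set (Fin n → k)) ≠ {x | affFun (b r) x = 0} := by
    intro r h
    obtain ⟨q, hq1, hq2, hq3⟩ := hq r
    have : q ∈ ({x | x em = r} : Set (Fin n → k)) := by rw [h]; exact hq1
    simp only [Set.mem_setOf_eq] at this
    rw [hq3] at this
    exact one_ne_zero (by linear_combination this)
  -- subset property
  have hsub : ∀ r : k,
      ({x | affFun a x = 0} ∩ {x | x em = r} : Set (Fin n → k))
        ⊆ {x | affFun (b r) x = 0} := by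
    intro r x hx
    obtain ⟨h1, h2⟩ := hx
    simp only [Set.mem_setOf_eq] at h1 h2 ⊢
    have h3 := hid r x
    rw [h1, h2] at h3
    simp only [sub_self, mul_zero, add_zero] at h3
    exact h3.symm
  -- Hw is a hyperplane
  set w : k → Fin (n + 1) → k := fun r i =>
    if i = 0 then -r else if i = em.succ then 1 else 0 with hw
  have hwfun : ∀ (r : k) (x : Fin n → k), affFun (w r) x = x em - r := by
    intro r x
    rw [affFun_eq]
    have h0 : linPart (w r) x = x em := by
      simp only [linPart, LinearMap.coe_mk, AddHom.coe_mk]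
      rw [Finset.sum_eq_single em]
      · simp [hw, Fin.succ_ne_zero]
      · intro i _ hi
        have h1 : (i.succ : Fin (n + 1)) ≠ 0 := Fin.succ_ne_zero i
        have h2 : (i.succ : Fin (n + 1)) ≠ em.succ := by
          rw [Ne, Fin.succ_inj]; exact hi
        simp [hw, h1, h2]
      · simp
    rw [h0]
    simp [hw]
    ring
  have hwcv : ∀ r : k, IsCoeffVec ({x | x em = r} : Set (Fin n → k)) (w r) := by
    intro r
    constructor
    · refine ⟨em, ?_⟩
      simp [hw, Fin.succ_ne_zero]
    · ext x
      simp only [Set.mem_setOf_eq, hwfun, sub_eq_zero]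
  -- coefficient vectors for H₁, H₂
  have hbcv : ∀ r : k, IsCoeffVec ({x | affFun (b r) x = 0} : Set (Fin n → k)) (b r) := by
    intro r
    exact ⟨⟨ej, by rw [hejsucc, hbj]; exact haj⟩, rfl⟩
  -- main triple
  have main : ∀ r : k, DependentTriple H ({x | x em = r} : Set (Fin n → k))
      ({x | affFun (b r) x = 0} : Set (Fin n → k)) := by
    intro r
    obtain ⟨A, hA1, hA2, hA3⟩ := key_subspace hmn a j hj1 hjm haj r
    refine ⟨⟨a, ha⟩, ⟨w r, hwcv r⟩, ⟨b r, hbcv r⟩, hne1 r, hne2 r, hne3 r,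
      A, ?_, ?_, hA3⟩
    · rw [hA1, hHset]
      exact (Set.inter_eq_left.mpr (hsub r)).symm
    · rw [hHset, Set.inter_eq_left.mpr (hsub r)]
      exact hA2
  exact ⟨{x | affFun (b 0) x = 0}, {x | affFun (b 1) x = 0}, b 0, b 1,
    hbcv 0, hbcv 1, hbhigh 0, hbhigh 1, main 0, main 1⟩
end

section
/- Let Λ be a commutative ring and let (H_1, H_2, H_3) be a dependent triple of affine hyperplanes in k^n. Let σ be an H_1-compatible function from the set of affine hyperplanes of k^n to Λ with σ(H_2) = 1, and let ε be a function from the set of affine hyperplanes of k^n to Λ such that the function H ↦ ε(H)·σ(H) is also H_1-compatible. Then σ(H_3) = 1 and ε(H_2) = ε(H_3). -/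
open scoped BigOperators

/-- the scaling factors `ε` are equal on a dependent triple. -/
theorem stmt_17 {k : Type*} [Field k] {Λ : Type*} [CommRing Λ] {n : ℕ} (hn : 2 ≤ n)
    (H₁ H₂ H₃ : Set (Fin n → k)) (hdep : DependentTriple H₁ H₂ H₃)
    (σ : Set (Fin n → k) → Λ) (hσ : HCompatible H₁ σ) (hσ2 : σ H₂ = 1)
    (ε : Set (Fin n → k) → Λ)
    (hεσ : HCompatible H₁ (fun H => ε H * σ H)) :
    σ H₃ = 1 ∧ ε H₂ = ε H₃ := by
  have h1 : σ H₂ = σ H₃ := hσ.2 H₂ H₃ hdep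
  have h2 : ε H₂ * σ H₂ = ε H₃ * σ H₃ := hεσ.2 H₂ H₃ hdep
  constructor
  · rw [← h1, hσ2]
  · rw [hσ2] at h2
    rw [← h1, hσ2] at h2
    simpa using h2
end
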